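/- The ring-supporting subsets U of ℤ with (U:U) = 3ℤ are exactly: 3ℤ, 3ℤ ∪ (3ℤ+1), and 3ℤ ∪ (3ℤ+2). -/

import Mathlib

/-- A subset `U` of an additive commutative group containing `0` is ring-supporting if
for all `u, v, w ∈ U` with `u + v + w ∈ U`, one has `u + v ∈ U ↔ v + w ∈ U`. -/
def AddRingSupporting {A : Type*} [AddCommGroup A] (U : Set A) : Prop :=
  (0 : A) ∈ U ∧ ∀ u ∈ U, ∀ v ∈ U, ∀ w ∈ U, u + v + w ∈ U → (u + v ∈ U ↔ v + w ∈ U)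

/-- The stabilizer `(U : U) = {a | a + U = U}` of a subset `U` of an additive group. -/
def AddStab {A : Type*} [AddCommGroup A] (U : Set A) : Set A :=
  {a : A | (a + ·) '' U = U}

/-! Once `3ℤ ⊆ (U:U)`, membership in `U` depends only on the residue mod 3, so `U` is determined
by which of `0, 1, 2` it contains. It contains `0`, and not both `1` and `2`, since then `U = ℤ`
and `1 ∈ (U:U)`; this leaves the three listed sets. Conversely, for each of them the
ring-supporting condition and `(U:U) = 3ℤ` are checks on residues mod 3. -/

theorem mem_addStab_iff {A : Type*} [AddCommGroup A] {U : Set A} {a : A} :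
    a ∈ AddStab U ↔ ∀ x, a + x ∈ U ↔ x ∈ U := by
  refine ⟨fun h x => ?_, fun h => Set.ext fun y => ?_⟩
  · conv_lhs => rw [← h]
    exact (add_right_injective a).mem_set_image
  · rw [show y = a + (-a + y) by abel, (add_right_injective a).mem_set_image]
    exact (h _).symm

namespace Int

theorem exists_eq_three_mul_or_eq_three_mul_add_iff {r : ℤ} (hr : 0 ≤ r ∧ r < 3) (x : ℤ) :
    (∃ k, x = 3 * k ∨ x = 3 * k + r) ↔ x % 3 = 0 ∨ x % 3 = r := by
  refine ⟨?_, fun h => ⟨x / 3, by omega⟩⟩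
  rintro ⟨k, rfl | rfl⟩ <;> omega

theorem mem_iff_emod_mem_of_subset_addStab {U : Set ℤ} {n : ℤ}
    (hU : {m : ℤ | ∃ k : ℤ, m = n * k} ⊆ AddStab U) (x : ℤ) : x ∈ U ↔ x % n ∈ U := by
  have hx : n * (x / n) ∈ AddStab U := hU ⟨x / n, rfl⟩
  simpa only [Int.mul_ediv_add_emod] using mem_addStab_iff.1 hx (x % n)

theorem exists_residue_of_addStab_eq_three {U : Set ℤ} (h0 : 0 ∈ U)
    (hU : AddStab U = {m : ℤ | ∃ k : ℤ, m = 3 * k}) :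
    ∃ r, (0 ≤ r ∧ r < 3) ∧ ∀ x, x ∈ U ↔ x % 3 = 0 ∨ x % 3 = r := by
  have hmem (x : ℤ) : x ∈ U ↔ x % 3 = 0 ∧ 0 ∈ U ∨ x % 3 = 1 ∧ 1 ∈ U ∨ x % 3 = 2 ∧ 2 ∈ U := by
    rw [mem_iff_emod_mem_of_subset_addStab hU.ge]
    rcases (by omega : x % 3 = 0 ∨ x % 3 = 1 ∨ x % 3 = 2) with h | h | h <;> simp [h]
  have h1 : (1 : ℤ) ∉ AddStab U := by rw [hU]; rintro ⟨k, hk⟩; omega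
  by_cases h1U : (1 : ℤ) ∈ U <;> by_cases h2U : (2 : ℤ) ∈ U <;>
    simp only [h0, h1U, h2U, and_true, and_false, or_false, false_or] at hmem
  · refine absurd (mem_addStab_iff.2 fun x => ?_) h1
    rw [hmem, hmem]
    omega
  · exact ⟨1, by norm_num, hmem⟩
  · exact ⟨2, by norm_num, hmem⟩
  · exact ⟨0, by norm_num, fun x => (hmem x).trans or_self_iff.symm⟩

theorem addRingSupporting_of_mem_iff {V : Set ℤ} {r : ℤ}
    (hV : ∀ x, x ∈ V ↔ x % 3 = 0 ∨ x % 3 = r) :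
    AddRingSupporting V := by
  refine ⟨?_, ?_⟩ <;> simp only [hV] <;> omega

theorem addStab_eq_of_mem_iff {V : Set ℤ} {r : ℤ} (hr : 0 ≤ r ∧ r < 3)
    (hV : ∀ x, x ∈ V ↔ x % 3 = 0 ∨ x % 3 = r) :
    AddStab V = {m : ℤ | ∃ k : ℤ, m = 3 * k} := by
  ext m
  simp only [mem_addStab_iff, hV]
  refine ⟨fun h => ⟨m / 3, ?_⟩, ?_⟩
  · have := h 0; have := h (-m); omega
  · rintro ⟨k, rfl⟩ x; omega

end Int

theorem ringSupporting_stab_three (U : Set ℤ) :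
    (AddRingSupporting U ∧ AddStab U = {m : ℤ | ∃ k : ℤ, m = 3 * k}) ↔
      (U = {x : ℤ | ∃ k : ℤ, x = 3 * k} ∨
        U = {x : ℤ | ∃ k : ℤ, x = 3 * k ∨ x = 3 * k + 1} ∨
        U = {x : ℤ | ∃ k : ℤ, x = 3 * k ∨ x = 3 * k + 2}) := by
  -- `3 ∣ x` unfolds to the membership `∃ k, x = 3 * k`
  have mem_three_mul (x : ℤ) : 3 ∣ x ↔ x % 3 = 0 ∨ x % 3 = 0 :=
    Int.dvd_iff_emod_eq_zero.trans or_self_iff.symm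
  have mem_three_mul_or_add_one :=
    Int.exists_eq_three_mul_or_eq_three_mul_add_iff (r := 1) (by norm_num)
  have mem_three_mul_or_add_two :=
    Int.exists_eq_three_mul_or_eq_three_mul_add_iff (r := 2) (by norm_num)
  constructor
  · rintro ⟨⟨h0, -⟩, hU⟩
    obtain ⟨r, ⟨hr0, hr3⟩, hmem⟩ := Int.exists_residue_of_addStab_eq_three h0 hU
    interval_cases r
    · exact .inl (Set.ext fun x => (hmem x).trans (mem_three_mul x).symm)
    · exact .inr (.inl (Set.ext fun x => (hmem x).trans (mem_three_mul_or_add_one x).symm))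
    · exact .inr (.inr (Set.ext fun x => (hmem x).trans (mem_three_mul_or_add_two x).symm))
  · intro hU
    obtain ⟨r, hr, hmem⟩ : ∃ r, (0 ≤ r ∧ r < 3) ∧ ∀ x, x ∈ U ↔ x % 3 = 0 ∨ x % 3 = r := by
      rcases hU with rfl | rfl | rfl
      exacts [⟨0, by norm_num, mem_three_mul⟩, ⟨1, by norm_num, mem_three_mul_or_add_one⟩,
        ⟨2, by norm_num, mem_three_mul_or_add_two⟩]
    exact ⟨Int.addRingSupporting_of_mem_iff hmem, Int.addStab_eq_of_mem_iff hr hmem⟩
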